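/- Let E ⊆ [0,T] be a measurable set of positive measure and let ℓ ∈ (0,T) be a Lebesgue density point of E. Then for any q ∈ (0,1) there exists a strictly decreasing sequence {ℓ_m}_{m≥1} in (ℓ,T) with lim_{m→∞} ℓ_m = ℓ, ℓ_{m+1} − ℓ_{m+2} = q(ℓ_m − ℓ_{m+1}) for all m ≥ 1, and |E ∩ (ℓ_{m+1}, ℓ_m)| ≥ (ℓ_m − ℓ_{m+1})/3 for all m ≥ 1. -/
import Mathlib


open MeasureTheory

theorem stmt_3 (T : ℝ) (hT : 0 < T) (E : Set ℝ) (hE : MeasurableSet E)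
    (hEsub : E ⊆ Set.Icc 0 T) (hEpos : 0 < volume E)
    (ℓ : ℝ) (hℓ : ℓ ∈ Set.Ioo 0 T)
    (hdensity : Filter.Tendsto (fun h => (volume (E ∩ Set.Ioo ℓ (ℓ + h))).toReal / h)
      (nhdsWithin 0 (Set.Ioi 0)) (nhds 1))
    (q : ℝ) (hq : q ∈ Set.Ioo (0:ℝ) 1) :
    ∃ l : ℕ → ℝ, StrictAnti l ∧ (∀ m, l m ∈ Set.Ioo ℓ T) ∧
      Filter.Tendsto l Filter.atTop (nhds ℓ) ∧
      (∀ m, l (m+1) - l (m+2) = q * (l m - l (m+1))) ∧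
      (∀ m, (l m - l (m+1)) / 3 ≤ (volume (E ∩ Set.Ioo (l (m+1)) (l m))).toReal) := by
  obtain ⟨hq0, hq1⟩ := hq
  obtain ⟨hℓ0, hℓT⟩ := hℓ
  set ε : ℝ := (1 - q) / 3 with hε
  have hε0 : 0 < ε := by rw [hε]; linarith
  -- density: eventually ratio > 1 - ε
  have hev : ∀ᶠ h in nhdsWithin 0 (Set.Ioi (0:ℝ)),
      (volume (E ∩ Set.Ioo ℓ (ℓ + h))).toReal / h > 1 - ε :=
    hdensity.eventually (eventually_gt_nhds (by linarith))
  rw [eventually_nhdsWithin_iff, Metric.eventually_nhds_iff] at hev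
  obtain ⟨δ, hδ0, hδ⟩ := hev
  set c : ℝ := min δ (T - ℓ) / 2 with hc
  have hc0 : 0 < c := by
    have : 0 < min δ (T - ℓ) := lt_min hδ0 (by linarith)
    positivity
  have hcδ : c < δ := by
    have : min δ (T - ℓ) ≤ δ := min_le_left _ _
    simp only [hc]; linarith
  have hcT : c < T - ℓ := by
    have : min δ (T - ℓ) ≤ T - ℓ := min_le_right _ _
    simp only [hc]; linarith
  refine ⟨fun m => ℓ + c * q ^ m, ?_, ?_, ?_, ?_, ?_⟩
  · intro m n hmn
    have := pow_lt_pow_right_of_lt_one₀ hq0 hq1 hmn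
    simp only
    nlinarith
  · intro m
    have h1 : q ^ m ≤ 1 := pow_le_one₀ hq0.le hq1.le
    have h2 : 0 < q ^ m := pow_pos hq0 m
    constructor <;> simp only <;> nlinarith
  · have := tendsto_pow_atTop_nhds_zero_of_lt_one hq0.le hq1
    have h2 : Filter.Tendsto (fun m : ℕ => ℓ + c * q ^ m) Filter.atTop
        (nhds (ℓ + c * 0)) := (tendsto_const_nhds.mul this).const_add _
    simpa using h2
  · intro m
    simp only
    ring
  · intro m
    have hqm : 0 < q ^ m := pow_pos hq0 m
    have hqm1 : q ^ m ≤ 1 := pow_le_one₀ hq0.le hq1.le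
    set a : ℝ := ℓ + c * q ^ (m + 1) with ha
    set b : ℝ := ℓ + c * q ^ m with hb
    have hab : a < b := by
      have hps := pow_succ q m
      simp only [ha, hb]
      nlinarith [mul_pos hc0 hqm]
    have hℓa : ℓ < a := by simp only [ha]; nlinarith [pow_pos hq0 (m+1)]
    -- measure bounds
    have hBfin : volume (E ∩ Set.Ioo ℓ a) ≤ volume (Set.Ioo ℓ a) :=
      measure_mono Set.inter_subset_right
    have hBle : (volume (E ∩ Set.Ioo ℓ a)).toReal ≤ a - ℓ := by
      have := ENNReal.toReal_mono (by simp [Real.volume_Ioo]) hBfin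
      rwa [Real.volume_Ioo, ENNReal.toReal_ofReal (by linarith)] at this
    have hAge : (1 - ε) * (b - ℓ) ≤ (volume (E ∩ Set.Ioo ℓ b)).toReal := by
      have hbℓ : 0 < b - ℓ := by simp only [hb]; nlinarith
      have hbδ : b - ℓ < δ := by
        have : c * q ^ m ≤ c := by nlinarith
        simp only [hb]; linarith
      have := hδ (y := b - ℓ) (by simpa [Real.dist_eq, abs_of_pos hbℓ] using hbδ)
        (Set.mem_Ioi.mpr hbℓ)
      have hb' : ℓ + (b - ℓ) = b := by ring
      rw [hb'] at this
      rw [gt_iff_lt, lt_div_iff₀ hbℓ] at this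
      nlinarith
    -- splitting
    have hsplit : volume (E ∩ Set.Ioo ℓ b) ≤
        volume (E ∩ Set.Ioo ℓ a) + volume (E ∩ Set.Ioo a b) := by
      have hsub : E ∩ Set.Ioo ℓ b ⊆ (E ∩ Set.Ioo ℓ a) ∪ ({a} ∪ E ∩ Set.Ioo a b) := by
        rintro x ⟨hxE, hx1, hx2⟩
        rcases lt_trichotomy x a with h | h | h
        · exact Or.inl ⟨hxE, hx1, h⟩
        · exact Or.inr (Or.inl (by simp [h]))
        · exact Or.inr (Or.inr ⟨hxE, h, hx2⟩)
      calc volume (E ∩ Set.Ioo ℓ b)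
          ≤ volume ((E ∩ Set.Ioo ℓ a) ∪ ({a} ∪ E ∩ Set.Ioo a b)) := measure_mono hsub
        _ ≤ volume (E ∩ Set.Ioo ℓ a) + volume ({a} ∪ E ∩ Set.Ioo a b) :=
            measure_union_le _ _
        _ ≤ volume (E ∩ Set.Ioo ℓ a) + (volume ({a} : Set ℝ) + volume (E ∩ Set.Ioo a b)) := by
            gcongr; exact measure_union_le _ _
        _ = volume (E ∩ Set.Ioo ℓ a) + volume (E ∩ Set.Ioo a b) := by
            simp [Real.volume_singleton]
    have hfin1 : volume (E ∩ Set.Ioo ℓ a) ≠ ⊤ :=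
      (lt_of_le_of_lt hBfin (by simp [Real.volume_Ioo])).ne
    have hfin2 : volume (E ∩ Set.Ioo a b) ≠ ⊤ :=
      (lt_of_le_of_lt (measure_mono Set.inter_subset_right) (by simp [Real.volume_Ioo])).ne
    have hsplit' : (volume (E ∩ Set.Ioo ℓ b)).toReal ≤
        (volume (E ∩ Set.Ioo ℓ a)).toReal + (volume (E ∩ Set.Ioo a b)).toReal := by
      have := ENNReal.toReal_mono (by simp [ENNReal.add_ne_top, hfin1, hfin2]) hsplit
      rwa [ENNReal.toReal_add hfin1 hfin2] at this
    have hba : b - a = c * q ^ m * (1 - q) := by simp only [ha, hb, pow_succ]; ring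
    have haℓ : a - ℓ = c * q ^ m * q := by simp only [ha, pow_succ]; ring
    have hbℓ' : b - ℓ = c * q ^ m := by simp only [hb]; ring
    have key : (b - a) / 3 ≤ (volume (E ∩ Set.Ioo a b)).toReal := by
      have h1 : (1 - ε) * (b - ℓ) - (a - ℓ) ≤ (volume (E ∩ Set.Ioo a b)).toReal := by
        linarith
      rw [hba]
      rw [hbℓ', haℓ, hε] at h1
      nlinarith
    simpa [ha, hb] using key
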